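/- Antichain composition principle: let φ be an antichain formula of EF+F⁻¹, let L₁,…,Lₙ be pairwise disjoint tree-definable tree languages, let a₁,…,aₙ ∈ A be leaf labels, and let K be a tree-definable tree language. Then the tree language {t : t[(L₁,φ)→a₁,…,(Lₙ,φ)→aₙ] ∈ K} is tree-definable in EF+F⁻¹. -/

import Mathlib

/- Trees over a two-sorted alphabet: leaves labeled in `A`, inner nodes labeled in `B`. -/
mutual
inductive FTree (A B : Type) : Type where
  | leaf (a : A) : FTree A B
  | node (b : B) (f : FForest A B) : FTree A B
inductive FForest (A B : Type) : Type where
  | single (t : FTree A B) : FForest A B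
  | cons (t : FTree A B) (f : FForest A B) : FForest A B
end

/-- The (nonempty) list of trees constituting a forest. -/
def FForest.toList {A B : Type} : FForest A B → List (FTree A B)
  | .single t => [t]
  | .cons t f => t :: f.toList

/-- Concatenation `s + t` of forests. -/
def FForest.append {A B : Type} : FForest A B → FForest A B → FForest A B
  | .single t, f => .cons t f
  | .cons t f', f => .cons t (f'.append f)

/-- The children of the root of a tree. -/
def FTree.children {A B : Type} : FTree A B → List (FTree A B)
  | .leaf _ => []
  | .node _ f => f.toList

/-- The subtree of `t` rooted at the node reached by the path of child indices, if any.
Nodes of a tree are identified with the valid such paths. -/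
def FTree.subtreeAt {A B : Type} : List ℕ → FTree A B → Option (FTree A B)
  | [], t => some t
  | i :: p, t =>
    match t.children[i]? with
    | some c => FTree.subtreeAt p c
    | none => none

/-- Formulas of the temporal logic EF + F⁻¹ over the two-sorted alphabet `(A, B)`. -/
inductive EFFormula (A B : Type) : Type where
  | leafLab (a : A) : EFFormula A B
  | innerLab (b : B) : EFFormula A B
  | not (φ : EFFormula A B) : EFFormula A B
  | and (φ ψ : EFFormula A B) : EFFormula A B
  | EF (φ : EFFormula A B) : EFFormula A B
  | Finv (φ : EFFormula A B) : EFFormula A B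

/-- Satisfaction of an EF+F⁻¹ formula at the node `x` (a path) of the tree `t`.
`EF φ` holds at `x` iff `φ` holds at some proper descendant of `x`, and `F⁻¹ φ`
holds at `x` iff `φ` holds at some proper ancestor of `x`. -/
def EFSat {A B : Type} (t : FTree A B) : List ℕ → EFFormula A B → Prop
  | x, .leafLab a => FTree.subtreeAt x t = some (.leaf a)
  | x, .innerLab b => ∃ f, FTree.subtreeAt x t = some (.node b f)
  | x, .not φ => ¬ EFSat t x φ
  | x, .and φ ψ => EFSat t x φ ∧ EFSat t x ψ
  | x, .EF φ => ∃ y : List ℕ, x <+: y ∧ x ≠ y ∧ (FTree.subtreeAt y t).isSome ∧ EFSat t y φ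
  | x, .Finv φ => ∃ y : List ℕ, y <+: x ∧ y ≠ x ∧ EFSat t y φ

/-- A formula is true in a tree if it holds at its root. -/
def TreeSat {A B : Type} (t : FTree A B) (φ : EFFormula A B) : Prop := EFSat t [] φ

/-- A tree language is tree-definable if some EF+F⁻¹ formula is true in exactly its trees. -/
def TreeDefinable {A B : Type} (L : Set (FTree A B)) : Prop :=
  ∃ φ : EFFormula A B, ∀ t, t ∈ L ↔ TreeSat t φ

/-- Boolean combinations of languages of the form "some tree of the forest satisfies φ". -/
inductive ForestFormula (A B : Type) : Type where
  | ex (φ : EFFormula A B) : ForestFormula A B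
  | not (Φ : ForestFormula A B) : ForestFormula A B
  | and (Φ Ψ : ForestFormula A B) : ForestFormula A B

def ForestSat {A B : Type} (f : FForest A B) : ForestFormula A B → Prop
  | .ex φ => ∃ t ∈ f.toList, TreeSat t φ
  | .not Φ => ¬ ForestSat f Φ
  | .and Φ Ψ => ForestSat f Φ ∧ ForestSat f Ψ

/-- A forest language is forest-definable in EF+F⁻¹ if it is a Boolean combination of
languages of the form "some tree of the forest satisfies φ". -/
def ForestDefinable {A B : Type} (L : Set (FForest A B)) : Prop :=
  ∃ Φ : ForestFormula A B, ∀ f, f ∈ L ↔ ForestSat f Φ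

/-- A formula `φ` is antichain if in every tree, the set of nodes where `φ` holds is an
antichain with respect to the descendant relation. -/
def AntichainFormula {A B : Type} (φ : EFFormula A B) : Prop :=
  ∀ (t : FTree A B) (x y : List ℕ),
    (FTree.subtreeAt x t).isSome → (FTree.subtreeAt y t).isSome →
    EFSat t x φ → EFSat t y φ → x <+: y → x = y

open Classical in
/- The simultaneous substitution `t[(L₁,φ)→a₁,…,(Lₙ,φ)→aₙ]`: for each node `x` of the
original tree `t0` where `φ` holds (evaluated in `t0`) and whose subtree belongs to some
(necessarily unique, by disjointness) `L i`, the entire subtree rooted at `x` is replaced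
by a single leaf labeled `lab i`.  The auxiliary functions carry the path `p` of the
current subtree inside `t0`. -/
mutual
noncomputable def substAuxT {A B : Type} (t0 : FTree A B) (φ : EFFormula A B) {n : ℕ}
    (L : Fin n → Set (FTree A B)) (lab : Fin n → A) : List ℕ → FTree A B → FTree A B
  | p, .leaf a =>
    if h : EFSat t0 p φ ∧ ∃ i, FTree.leaf a ∈ L i then .leaf (lab h.2.choose)
    else .leaf a
  | p, .node b f =>
    if h : EFSat t0 p φ ∧ ∃ i, FTree.node b f ∈ L i then .leaf (lab h.2.choose)
    else .node b (substAuxF t0 φ L lab p 0 f)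
noncomputable def substAuxF {A B : Type} (t0 : FTree A B) (φ : EFFormula A B) {n : ℕ}
    (L : Fin n → Set (FTree A B)) (lab : Fin n → A) :
    List ℕ → ℕ → FForest A B → FForest A B
  | p, i, .single t => .single (substAuxT t0 φ L lab (p ++ [i]) t)
  | p, i, .cons t f => .cons (substAuxT t0 φ L lab (p ++ [i]) t) (substAuxF t0 φ L lab p (i + 1) f)
end

/-- The tree `t[(L₁,φ)→a₁,…,(Lₙ,φ)→aₙ]`. -/
noncomputable def treeSubst {A B : Type} (φ : EFFormula A B) {n : ℕ}
    (L : Fin n → Set (FTree A B)) (lab : Fin n → A) (t : FTree A B) : FTree A B :=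
  substAuxT t φ L lab [] t

/-!
Replacing the selected subtrees by leaves keeps every other node of `t` together with its
ancestors and descendants, so a formula about `t[(L₁,φ)→a₁,…,(Lₙ,φ)→aₙ]` can be pulled back to
`t`: given a formula `σ` marking the replaced nodes and formulas marking the nodes replaced by
the leaf `a`, inner labels are read off where `σ` fails, leaf labels `a` come from unreplaced
leaves or from nodes replaced by `a`, and `EF` skips the nodes strictly below a replaced node,
which are those satisfying `F⁻¹σ`.

These marking formulas exist because `φ` is an antichain: a formula `ψ` about the subtree at a
`φ`-node `x` can be evaluated at `x` itself, relativizing `F⁻¹` to the nodes satisfying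
`φ ∨ F⁻¹φ`, which on every branch through `x` are exactly the descendants of `x`.
-/

theorem forall_strictPrefix_cons_iff {α : Type*} {P : List α → Prop} {j : α} {q : List α} :
    (∀ q', q' <+: j :: q → q' ≠ j :: q → P q') ↔ P [] ∧ ∀ q', q' <+: q → q' ≠ q → P (j :: q') := by
  simp only [List.prefix_cons_iff]
  refine ⟨fun h => ⟨h [] (.inl rfl) (List.cons_ne_nil _ _).symm, fun q' hq' hne =>
    h _ (.inr ⟨q', rfl, hq'⟩) (by simpa using hne)⟩, ?_⟩
  rintro ⟨hnil, hcons⟩ q' (rfl | ⟨q'', rfl, hq''⟩) hne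
  · exact hnil
  · exact hcons q'' hq'' (by simpa using hne)

namespace FTree

variable {A B : Type}

theorem subtreeAt_cons (i : ℕ) (p : List ℕ) (t : FTree A B) :
    subtreeAt (i :: p) t = t.children[i]?.bind (subtreeAt p) := by
  rw [subtreeAt]
  cases t.children[i]? <;> rfl

theorem subtreeAt_append (p q : List ℕ) (t : FTree A B) :
    subtreeAt (p ++ q) t = (subtreeAt p t).bind (subtreeAt q) := by
  induction p generalizing t with
  | nil => rfl
  | cons i p ih =>
    simp only [List.cons_append, subtreeAt_cons]
    cases t.children[i]? <;> simp [ih]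

theorem isSome_subtreeAt_of_prefix {p q : List ℕ} {t : FTree A B} (h : p <+: q)
    (hq : (subtreeAt q t).isSome) : (subtreeAt p t).isSome := by
  obtain ⟨r, rfl⟩ := h
  rw [subtreeAt_append] at hq
  cases hp : subtreeAt p t <;> simp_all

end FTree

open FTree

namespace EFFormula

variable {A B : Type}

def or (ψ χ : EFFormula A B) : EFFormula A B := .not (.and ψ.not χ.not)

theorem efSat_or {t : FTree A B} {x : List ℕ} {ψ χ : EFFormula A B} :
    EFSat t x (ψ.or χ) ↔ EFSat t x ψ ∨ EFSat t x χ := by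
  simp only [EFFormula.or, EFSat, not_and_or, not_not]

def relativize (φ : EFFormula A B) : EFFormula A B → EFFormula A B
  | .leafLab a => .leafLab a
  | .innerLab b => .innerLab b
  | .not ψ => .not (relativize φ ψ)
  | .and ψ χ => .and (relativize φ ψ) (relativize φ χ)
  | .EF ψ => .EF (relativize φ ψ)
  | .Finv ψ => .Finv (.and (φ.or φ.Finv) (relativize φ ψ))

end EFFormula

open EFFormula

section Antichain

variable {A B : Type} {φ : EFFormula A B}

theorem AntichainFormula.eq_of_prefix_or_prefix (hφ : AntichainFormula φ) {t : FTree A B}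
    {x y : List ℕ} (hx : (subtreeAt x t).isSome) (hy : (subtreeAt y t).isSome)
    (hxφ : EFSat t x φ) (hyφ : EFSat t y φ) (hxy : x <+: y ∨ y <+: x) : x = y :=
  hxy.elim (hφ t x y hx hy hxφ hyφ) fun h => (hφ t y x hy hx hyφ hxφ h).symm

/-- By the antichain property, `x` is the only `φ`-node on the branch of `z`. -/
theorem AntichainFormula.efSat_or_Finv_iff (hφ : AntichainFormula φ) {t : FTree A B}
    {x w z : List ℕ} (hz : (subtreeAt z t).isSome) (hxz : x <+: z) (hwz : w <+: z)
    (hxφ : EFSat t x φ) : EFSat t w (φ.or φ.Finv) ↔ x <+: w := by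
  have hx := isSome_subtreeAt_of_prefix hxz hz
  rw [efSat_or, EFSat]
  constructor
  · rintro (hwφ | ⟨v, hvw, -, hvφ⟩)
    · rw [hφ.eq_of_prefix_or_prefix hx (isSome_subtreeAt_of_prefix hwz hz) hxφ hwφ
        (List.prefix_or_prefix_of_prefix hxz hwz)]
    · have hvz := hvw.trans hwz
      rwa [hφ.eq_of_prefix_or_prefix hx (isSome_subtreeAt_of_prefix hvz hz) hxφ hvφ
        (List.prefix_or_prefix_of_prefix hxz hvz)]
  · intro hxw
    by_cases hwx : x = w
    · exact .inl (hwx ▸ hxφ)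
    · exact .inr ⟨x, hxw, hwx, hxφ⟩

theorem AntichainFormula.efSat_relativize (hφ : AntichainFormula φ) {t u : FTree A B}
    {x : List ℕ} (hx : subtreeAt x t = some u) (hxφ : EFSat t x φ) (ψ : EFFormula A B) :
    ∀ q, (subtreeAt q u).isSome → (EFSat t (x ++ q) (φ.relativize ψ) ↔ EFSat u q ψ) := by
  have hsub : ∀ q, subtreeAt (x ++ q) t = subtreeAt q u := by simp [subtreeAt_append, hx]
  induction ψ with
  | leafLab a => intro q _; simp only [relativize, EFSat, hsub]
  | innerLab b => intro q _; simp only [relativize, EFSat, hsub]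
  | not ψ ih => intro q hq; simp only [relativize, EFSat, ih q hq]
  | and ψ χ ih ih' => intro q hq; simp only [relativize, EFSat, ih q hq, ih' q hq]
  | EF ψ ih =>
    intro q _
    simp only [relativize, EFSat]
    constructor
    · rintro ⟨y, ⟨r, rfl⟩, hne, hy, hψ⟩
      rw [List.append_assoc] at hne hy hψ
      rw [hsub] at hy
      exact ⟨q ++ r, List.prefix_append _ _, by simpa using hne, hy, (ih _ hy).mp hψ⟩
    · rintro ⟨y, ⟨r, rfl⟩, hne, hy, hψ⟩
      exact ⟨x ++ (q ++ r), by simp, by simpa using hne, by rwa [hsub], (ih _ hy).mpr hψ⟩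
  | Finv ψ ih =>
    intro q hq
    have hxq : (subtreeAt (x ++ q) t).isSome := by rwa [hsub]
    simp only [relativize]
    rw [EFSat, EFSat]
    constructor
    · rintro ⟨w, hw, hne, hin, hψ⟩
      obtain ⟨y, rfl⟩ := (hφ.efSat_or_Finv_iff hxq (List.prefix_append _ _) hw hxφ).mp hin
      have hyq : y <+: q := (List.prefix_append_right_inj x).mp hw
      exact ⟨y, hyq, by simpa using hne, (ih y (isSome_subtreeAt_of_prefix hyq hq)).mp hψ⟩
    · rintro ⟨y, hyq, hne, hψ⟩
      have hw : x ++ y <+: x ++ q := (List.prefix_append_right_inj x).mpr hyq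
      exact ⟨x ++ y, hw, by simpa using hne,
        (hφ.efSat_or_Finv_iff hxq (List.prefix_append _ _) hw hxφ).mpr (List.prefix_append _ _),
        (ih y (isSome_subtreeAt_of_prefix hyq hq)).mpr hψ⟩

theorem AntichainFormula.exists_efSat_iff_subtree_mem (hφ : AntichainFormula φ)
    {M : Set (FTree A B)} (hM : TreeDefinable M) :
    ∃ σ : EFFormula A B, ∀ (t : FTree A B) (x : List ℕ) (u : FTree A B),
      subtreeAt x t = some u → (EFSat t x σ ↔ EFSat t x φ ∧ u ∈ M) := by
  obtain ⟨ψ, hψ⟩ := hM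
  refine ⟨.and φ (φ.relativize ψ), fun t x u hx => and_congr_right fun hxφ => ?_⟩
  simpa [hψ, TreeSat] using hφ.efSat_relativize hx hxφ ψ [] rfl

end Antichain

section Definable

variable {A B : Type}

theorem treeDefinable_empty (φ : EFFormula A B) : TreeDefinable (∅ : Set (FTree A B)) :=
  ⟨.and φ φ.not, fun t => by simp [TreeSat, EFSat]⟩

theorem TreeDefinable.union {M₁ M₂ : Set (FTree A B)} (h₁ : TreeDefinable M₁)
    (h₂ : TreeDefinable M₂) : TreeDefinable (M₁ ∪ M₂) := by
  obtain ⟨ψ₁, hψ₁⟩ := h₁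
  obtain ⟨ψ₂, hψ₂⟩ := h₂
  exact ⟨ψ₁.or ψ₂, fun t => by simp [hψ₁, hψ₂, TreeSat, efSat_or]⟩

theorem TreeDefinable.biUnion {ι : Type*} (s : Finset ι) {M : ι → Set (FTree A B)}
    (h₀ : TreeDefinable (∅ : Set (FTree A B))) (h : ∀ i ∈ s, TreeDefinable (M i)) :
    TreeDefinable (⋃ i ∈ s, M i) := by
  classical
  induction s using Finset.induction_on with
  | empty => simpa using h₀
  | insert i s _ ih =>
    rw [Finset.set_biUnion_insert]
    exact (h i (s.mem_insert_self i)).union (ih fun j hj => h j (s.mem_insert_of_mem hj))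

end Definable

section Substitution

variable {A B : Type} (φ : EFFormula A B) {n : ℕ} (L : Fin n → Set (FTree A B))
  (lab : Fin n → A) (t : FTree A B)

def ReplacedNode (w : List ℕ) : Prop :=
  ∃ u, subtreeAt w t = some u ∧ EFSat t w φ ∧ ∃ i, u ∈ L i

def SurvivingNode (x : List ℕ) : Prop :=
  ∀ w, w <+: x → w ≠ x → ¬ ReplacedNode φ L t w

variable {φ L t}

theorem SurvivingNode.of_prefix {x y : List ℕ} (hy : SurvivingNode φ L t y) (hxy : x <+: y) :
    SurvivingNode φ L t x := fun w hwx hne hw =>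
  hy w (hwx.trans hxy) (fun hwy => hne (hwx.sublist.antisymm (hwy ▸ hxy).sublist)) hw

variable (φ L t)

theorem substAuxF_toList_getElem? : ∀ (f : FForest A B) (p : List ℕ) (i j : ℕ),
    (substAuxF t φ L lab p i f).toList[j]? =
      f.toList[j]?.map (substAuxT t φ L lab (p ++ [i + j]))
  | .single u, p, i, j => by cases j <;> simp [substAuxF, FForest.toList]
  | .cons u f, p, i, j => by
    cases j with
    | zero => simp [substAuxF, FForest.toList]
    | succ j =>
      simp only [substAuxF, FForest.toList, List.getElem?_cons_succ,
        substAuxF_toList_getElem? f p (i + 1) j, Nat.add_right_comm i 1 j, Nat.add_assoc]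

open Classical in
theorem children_substAuxT_getElem? (p : List ℕ) (u : FTree A B) (j : ℕ) :
    (substAuxT t φ L lab p u).children[j]? =
      if EFSat t p φ ∧ ∃ i, u ∈ L i then none
      else u.children[j]?.map (substAuxT t φ L lab (p ++ [j])) := by
  cases u with
  | leaf a => rw [substAuxT]; split_ifs <;> simp [FTree.children]
  | node b f => rw [substAuxT]; split_ifs <;> simp [FTree.children, substAuxF_toList_getElem?]

open Classical in
theorem subtreeAt_substAuxT (q : List ℕ) :
    ∀ {p : List ℕ} {u : FTree A B}, subtreeAt p t = some u →
      subtreeAt q (substAuxT t φ L lab p u) =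
        if ∀ q', q' <+: q → q' ≠ q → ¬ ReplacedNode φ L t (p ++ q')
        then (subtreeAt q u).map (substAuxT t φ L lab (p ++ q)) else none := by
  induction q with
  | nil => intro p u _; simp [subtreeAt]
  | cons j q ih =>
    intro p u hp
    have hreplaced : ReplacedNode φ L t p ↔ EFSat t p φ ∧ ∃ i, u ∈ L i := by
      simp [ReplacedNode, hp]
    simp only [forall_strictPrefix_cons_iff, List.append_nil, subtreeAt_cons,
      children_substAuxT_getElem?, ← hreplaced]
    by_cases hr : ReplacedNode φ L t p
    · simp [hr]
    · cases hc : u.children[j]? with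
      | none => simp [hr]
      | some c =>
        have hpc : subtreeAt (p ++ [j]) t = some c := by
          simp [subtreeAt_append, hp, hc, subtreeAt]
        simpa [hr] using ih hpc

open Classical in
theorem subtreeAt_treeSubst (x : List ℕ) :
    subtreeAt x (treeSubst φ L lab t) =
      if SurvivingNode φ L t x then (subtreeAt x t).map (substAuxT t φ L lab x) else none := by
  rw [treeSubst, subtreeAt_substAuxT φ L lab t x rfl]
  congr 1

variable {φ L lab t}

theorem isSome_subtreeAt_treeSubst_iff {x : List ℕ} :
    (subtreeAt x (treeSubst φ L lab t)).isSome ↔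
      (subtreeAt x t).isSome ∧ SurvivingNode φ L t x := by
  rw [subtreeAt_treeSubst]
  split_ifs with h <;> simp [h]

theorem subtreeAt_treeSubst_of_survivingNode {x : List ℕ} {u : FTree A B}
    (hx : subtreeAt x t = some u) (hsurv : SurvivingNode φ L t x) :
    subtreeAt x (treeSubst φ L lab t) = some (substAuxT t φ L lab x u) := by
  rw [subtreeAt_treeSubst, if_pos hsurv, hx, Option.map_some]

theorem substAuxT_of_mem (hdisj : ∀ (i j : Fin n) (v : FTree A B), v ∈ L i → v ∈ L j → i = j)
    {p : List ℕ} {u : FTree A B} {i : Fin n} (hp : EFSat t p φ) (hu : u ∈ L i) :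
    substAuxT t φ L lab p u = .leaf (lab i) := by
  have h : EFSat t p φ ∧ ∃ i, u ∈ L i := ⟨hp, i, hu⟩
  cases u <;> rw [substAuxT, dif_pos h, hdisj _ _ _ h.2.choose_spec hu]

theorem substAuxT_eq_leaf_iff
    (hdisj : ∀ (i j : Fin n) (v : FTree A B), v ∈ L i → v ∈ L j → i = j)
    {p : List ℕ} {u : FTree A B} {a : A} :
    substAuxT t φ L lab p u = .leaf a ↔
      (EFSat t p φ ∧ ∃ i, u ∈ L i ∧ lab i = a) ∨
        (¬ (EFSat t p φ ∧ ∃ i, u ∈ L i) ∧ u = .leaf a) := by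
  by_cases hr : EFSat t p φ ∧ ∃ i, u ∈ L i
  · obtain ⟨hp, i, hi⟩ := hr
    have hex : ∃ i, u ∈ L i := ⟨i, hi⟩
    rw [substAuxT_of_mem hdisj hp hi]
    simp only [FTree.leaf.injEq, hp, hex, true_and, not_true_eq_false, false_and, or_false]
    exact ⟨fun h => ⟨i, hi, h⟩, fun ⟨j, hj, h⟩ => hdisj _ _ _ hi hj ▸ h⟩
  · have hr' : ¬ (EFSat t p φ ∧ ∃ i, u ∈ L i ∧ lab i = a) := fun ⟨hp, i, hi, _⟩ => hr ⟨hp, i, hi⟩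
    cases u <;> simp [substAuxT, hr, hr']

theorem exists_substAuxT_eq_node_iff
    (hdisj : ∀ (i j : Fin n) (v : FTree A B), v ∈ L i → v ∈ L j → i = j)
    {p : List ℕ} {u : FTree A B} {b : B} :
    (∃ f, substAuxT t φ L lab p u = .node b f) ↔
      ¬ (EFSat t p φ ∧ ∃ i, u ∈ L i) ∧ ∃ f, u = .node b f := by
  by_cases hr : EFSat t p φ ∧ ∃ i, u ∈ L i
  · obtain ⟨hp, i, hi⟩ := hr
    have hex : ∃ i, u ∈ L i := ⟨i, hi⟩
    simp [substAuxT_of_mem hdisj hp hi, hp, hex]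
  · cases u <;> simp [substAuxT, hr]

end Substitution


def EFFormula.pullback {A B : Type} (σ : EFFormula A B) (leafSel : A → EFFormula A B) :
    EFFormula A B → EFFormula A B
  | .leafLab a => (leafSel a).or (.and σ.not (.leafLab a))
  | .innerLab b => .and σ.not (.innerLab b)
  | .not ψ => .not (pullback σ leafSel ψ)
  | .and ψ χ => .and (pullback σ leafSel ψ) (pullback σ leafSel χ)
  | .EF ψ => .EF (.and σ.Finv.not (pullback σ leafSel ψ))
  | .Finv ψ => .Finv (pullback σ leafSel ψ)

section Pullback

variable {A B : Type} {φ : EFFormula A B} {n : ℕ} {L : Fin n → Set (FTree A B)}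
  {lab : Fin n → A} {t : FTree A B} {σ : EFFormula A B} {leafSel : A → EFFormula A B}

theorem efSat_Finv_iff_not_survivingNode
    (hσ : ∀ x u, subtreeAt x t = some u → (EFSat t x σ ↔ EFSat t x φ ∧ ∃ i, u ∈ L i))
    {y : List ℕ} (hy : (subtreeAt y t).isSome) :
    EFSat t y (.Finv σ) ↔ ¬ SurvivingNode φ L t y := by
  simp only [EFSat, SurvivingNode, not_forall, not_not, exists_prop]
  refine exists_congr fun w => and_congr_right fun hwy => and_congr_right fun _ => ?_
  obtain ⟨u, hu⟩ := Option.isSome_iff_exists.mp (isSome_subtreeAt_of_prefix hwy hy)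
  simp [ReplacedNode, hu, hσ w u hu]

theorem efSat_treeSubst_iff
    (hdisj : ∀ (i j : Fin n) (v : FTree A B), v ∈ L i → v ∈ L j → i = j)
    (hσ : ∀ x u, subtreeAt x t = some u → (EFSat t x σ ↔ EFSat t x φ ∧ ∃ i, u ∈ L i))
    (hleaf : ∀ a x u, subtreeAt x t = some u →
      (EFSat t x (leafSel a) ↔ EFSat t x φ ∧ ∃ i, u ∈ L i ∧ lab i = a))
    (ψ : EFFormula A B) {x : List ℕ} (hx : (subtreeAt x t).isSome)
    (hsurv : SurvivingNode φ L t x) :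
    EFSat (treeSubst φ L lab t) x ψ ↔ EFSat t x (σ.pullback leafSel ψ) := by
  induction ψ generalizing x with
  | leafLab a =>
    obtain ⟨u, hu⟩ := Option.isSome_iff_exists.mp hx
    simp only [EFSat, pullback, efSat_or, subtreeAt_treeSubst_of_survivingNode hu hsurv,
      Option.some_inj, substAuxT_eq_leaf_iff hdisj, hleaf a x u hu, hσ x u hu, hu]
  | innerLab b =>
    obtain ⟨u, hu⟩ := Option.isSome_iff_exists.mp hx
    simp only [EFSat, pullback, subtreeAt_treeSubst_of_survivingNode hu hsurv,
      Option.some_inj, exists_substAuxT_eq_node_iff hdisj, hσ x u hu, hu]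
  | not ψ ih => simp only [EFSat, pullback, ih hx hsurv]
  | and ψ χ ih ih' => simp only [EFSat, pullback, ih hx hsurv, ih' hx hsurv]
  | EF ψ ih =>
    simp only [pullback]
    rw [EFSat, EFSat]
    refine exists_congr fun y => and_congr_right fun _ => and_congr_right fun _ => ?_
    rw [isSome_subtreeAt_treeSubst_iff]
    change _ ↔ _ ∧ ¬ EFSat t y σ.Finv ∧ EFSat t y (σ.pullback leafSel ψ)
    constructor
    · rintro ⟨⟨hy, hsy⟩, hψ⟩
      exact ⟨hy, (efSat_Finv_iff_not_survivingNode hσ hy).not_left.mpr hsy, (ih hy hsy).mp hψ⟩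
    · rintro ⟨hy, hny, hψ⟩
      have hsy := (efSat_Finv_iff_not_survivingNode hσ hy).not_left.mp hny
      exact ⟨⟨hy, hsy⟩, (ih hy hsy).mpr hψ⟩
  | Finv ψ ih =>
    simp only [pullback]
    rw [EFSat, EFSat]
    exact exists_congr fun w => and_congr_right fun hw => and_congr_right fun _ =>
      ih (isSome_subtreeAt_of_prefix hw hx) (hsurv.of_prefix hw)

theorem treeSat_treeSubst_iff
    (hdisj : ∀ (i j : Fin n) (v : FTree A B), v ∈ L i → v ∈ L j → i = j)
    (hσ : ∀ x u, subtreeAt x t = some u → (EFSat t x σ ↔ EFSat t x φ ∧ ∃ i, u ∈ L i))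
    (hleaf : ∀ a x u, subtreeAt x t = some u →
      (EFSat t x (leafSel a) ↔ EFSat t x φ ∧ ∃ i, u ∈ L i ∧ lab i = a))
    (ψ : EFFormula A B) :
    TreeSat (treeSubst φ L lab t) ψ ↔ TreeSat t (σ.pullback leafSel ψ) :=
  efSat_treeSubst_iff hdisj hσ hleaf ψ rfl fun _ hw hne => absurd (List.prefix_nil.mp hw) hne

end Pullback

/-- antichain composition principle: if `φ` is an antichain formula,
`L₁,…,Lₙ` are pairwise disjoint tree-definable languages, `a₁,…,aₙ ∈ A` are leaf labels
and `K` is tree-definable, then `{t : t[(L₁,φ)→a₁,…,(Lₙ,φ)→aₙ] ∈ K}` is tree-definable. -/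
theorem antichain_composition {A B : Type} [Finite A] [Finite B]
    (φ : EFFormula A B) (hφ : AntichainFormula φ)
    {n : ℕ} (L : Fin n → Set (FTree A B))
    (hdisj : ∀ (i j : Fin n) (t : FTree A B), t ∈ L i → t ∈ L j → i = j)
    (hdef : ∀ i, TreeDefinable (L i))
    (lab : Fin n → A)
    (K : Set (FTree A B)) (hK : TreeDefinable K) :
    TreeDefinable {t : FTree A B | treeSubst φ L lab t ∈ K} := by
  classical
  obtain ⟨ψK, hψK⟩ := hK
  have hunion (s : Finset (Fin n)) : TreeDefinable (⋃ i ∈ s, L i) :=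
    .biUnion s (treeDefinable_empty φ) fun i _ => hdef i
  obtain ⟨σ, hσ⟩ := hφ.exists_efSat_iff_subtree_mem (hunion .univ)
  choose leafSel hleaf using fun a =>
    hφ.exists_efSat_iff_subtree_mem (hunion (Finset.univ.filter (lab · = a)))
  refine ⟨σ.pullback leafSel ψK, fun t => ?_⟩
  rw [Set.mem_ofPred_eq, hψK, treeSat_treeSubst_iff hdisj]
  · intro x u hu
    simpa using hσ t x u hu
  · intro a x u hu
    simpa [and_comm] using hleaf a t x u hu
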